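/- arXiv:1911.11050 — 3 statements merged into one kernel-verified Lean document; each statement's English description precedes it below -/
import Mathlib

section
/- If c is a bounded complex sequence indexed by the integers and γ > 0, then the sequence r̃ defined by r̃_n = (∑_{k∈ℤ} c_k · conj(c_{n-k}) · e^{-γk²} · e^{-γ(n-k)²}) · e^{γn²/2} is bounded, with ‖r̃‖_∞ ≤ C‖c‖_∞² where C = max(∑_{k∈ℤ} e^{-2γk²}, ∑_{k∈ℤ} e^{-γ(1-2k)²/2}). -/
/-!
Completing the square, `e^{-γk²} e^{-γ(n-k)²} e^{γn²/2} = e^{-γ(n-2k)²/2}`, so the `n`-th entry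
is at most `M² ∑ₖ e^{-γ(n-2k)²/2}`. Shifting `k` by `⌊n/2⌋`, this Gaussian sum is
`∑ₖ e^{-2γk²}` for even `n` and `∑ₖ e^{-γ(1-2k)²/2}` for odd `n`.
-/

open Real ComplexConjugate

lemma summable_exp_neg_mul_int_sq {a : ℝ} (ha : 0 < a) :
    Summable fun k : ℤ => exp (-a * k ^ 2) := by
  refine (summable_pow_mul_jacobiTheta₂_term_bound 0 (div_pos ha pi_pos) 0).congr fun k => ?_
  rw [pow_zero, one_mul]
  congr 1
  field_simp
  simp

lemma exp_neg_mul_sq_mul_exp_neg_mul_sub_sq_mul_exp (γ x y : ℝ) :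
    exp (-γ * x ^ 2) * exp (-γ * (y - x) ^ 2) * exp (γ * y ^ 2 / 2) =
      exp (-γ * (y - 2 * x) ^ 2 / 2) := by
  rw [← exp_add, ← exp_add]
  ring_nf

lemma tsum_comp_two_mul_add_sub_two_mul {α : Type*} [AddCommMonoid α] [TopologicalSpace α]
    (f : ℤ → α) (m r : ℤ) : ∑' k, f (2 * m + r - 2 * k) = ∑' k, f (r - 2 * k) := by
  rw [← (Equiv.addRight m).tsum_eq]
  refine tsum_congr fun k => ?_
  simp only [Equiv.coe_addRight]
  exact congrArg f (by ring)

lemma tsum_comp_sub_two_mul_le_max (f : ℤ → ℝ) (n : ℤ) :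
    ∑' k, f (n - 2 * k) ≤ max (∑' k, f (-(2 * k))) (∑' k, f (1 - 2 * k)) := by
  obtain ⟨m, rfl | rfl⟩ := Int.even_or_odd' n
  · refine le_max_of_le_left (le_of_eq ?_)
    simpa using tsum_comp_two_mul_add_sub_two_mul f m 0
  · exact le_max_of_le_right (tsum_comp_two_mul_add_sub_two_mul f m 1).le

lemma norm_mul_conj_mul_ofReal_le {z w : ℂ} {M t : ℝ} (hz : ‖z‖ ≤ M) (hw : ‖w‖ ≤ M)
    (ht : 0 ≤ t) : ‖z * conj w * (t : ℂ)‖ ≤ M ^ 2 * t := by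
  rw [norm_mul, norm_mul, Complex.norm_conj, Complex.norm_of_nonneg ht, sq]
  gcongr
  exact (norm_nonneg z).trans hz

theorem stmt1 (γ : ℝ) (hγ : 0 < γ) (c : ℤ → ℂ) (M : ℝ) (hc : ∀ k, ‖c k‖ ≤ M) :
    ∀ n : ℤ,
      ‖(∑' k : ℤ, c k * (starRingEnd ℂ) (c (n - k)) *
            (Real.exp (-γ * (k : ℝ)^2) : ℂ) * (Real.exp (-γ * ((n : ℝ) - (k : ℝ))^2) : ℂ)) *
          (Real.exp (γ * (n : ℝ)^2 / 2) : ℂ)‖ ≤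
        (max (∑' k : ℤ, Real.exp (-2 * γ * (k : ℝ)^2))
             (∑' k : ℤ, Real.exp (-γ * (1 - 2*(k : ℝ))^2 / 2))) * M^2 := by
  intro n
  set g : ℤ → ℝ := fun m => exp (-(γ / 2) * (m : ℝ) ^ 2) with hg
  have hterm (k : ℤ) : ‖c k * conj (c (n - k)) * (exp (-γ * (k : ℝ) ^ 2) : ℂ) *
      (exp (-γ * ((n : ℝ) - k) ^ 2) : ℂ) * (exp (γ * (n : ℝ) ^ 2 / 2) : ℂ)‖ ≤
      M ^ 2 * g (n - 2 * k) := by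
    have hw : exp (-γ * (k : ℝ) ^ 2) * exp (-γ * ((n : ℝ) - k) ^ 2) * exp (γ * (n : ℝ) ^ 2 / 2)
        = g (n - 2 * k) := by
      rw [exp_neg_mul_sq_mul_exp_neg_mul_sub_sq_mul_exp, hg]
      push_cast
      ring_nf
    convert norm_mul_conj_mul_ofReal_le (t := g (n - 2 * k)) (hc k) (hc (n - k))
      (exp_pos _).le using 2
    rw [← hw]
    push_cast
    ring
  have hsum : Summable fun k : ℤ => g (n - 2 * k) :=
    (summable_exp_neg_mul_int_sq (half_pos hγ)).comp_injective fun a b h => by omega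
  calc _ = ‖∑' k : ℤ, c k * conj (c (n - k)) * (exp (-γ * (k : ℝ) ^ 2) : ℂ) *
          (exp (-γ * ((n : ℝ) - k) ^ 2) : ℂ) * (exp (γ * (n : ℝ) ^ 2 / 2) : ℂ)‖ := by
        rw [tsum_mul_right]
    _ ≤ M ^ 2 * ∑' k, g (n - 2 * k) := tsum_of_norm_bounded (hsum.hasSum.mul_left _) hterm
    _ ≤ M ^ 2 * max (∑' k, g (-(2 * k))) (∑' k, g (1 - 2 * k)) := by
        gcongr
        exact tsum_comp_sub_two_mul_le_max g n
    _ = _ := by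
        rw [mul_comm, hg]
        push_cast
        ring_nf
end

section
/- If f(x) = ∑_{k∈ℤ} c_k e^{-γ(x-k)²} with c ∈ ℓ^∞(ℤ) and γ > 0, then |f(x)|² = ∑_{n∈ℤ} r̃_n e^{-2γ(x-n/2)²} for all real x, where r̃_n = (∑_{k∈ℤ} c_k conj(c_{n-k}) e^{-γk²} e^{-γ(n-k)²}) e^{γn²/2}. -/
/-!
Expanding `|f x|² = f x * conj (f x)` as a Cauchy product over `ℤ` and grouping the terms by
`n = k + l`, everything reduces to the pointwise identity for two Gaussians centred at `k` and
`l = n - k`: their product is a Gaussian with exponent `2γ` centred at the midpoint `n / 2`,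
`e^{-γ(x-k)²} e^{-γ(x-l)²} = e^{-γk²} e^{-γl²} e^{γn²/2} e^{-2γ(x-n/2)²}`.
Absolute convergence holds because `e^{-γ(x-k)²}` is `e^{-γx²}` times the norm of the `k`-th term
of a Jacobi theta series with `im τ = γ / π`.
-/

open Complex ComplexConjugate

theorem tsum_mul_tsum_eq_tsum_tsum_sub {G R : Type*} [AddCommGroup G] [NormedRing R]
    [CompleteSpace R] {f g : G → R} (hf : Summable fun k => ‖f k‖)
    (hg : Summable fun k => ‖g k‖) :
    (∑' k, f k) * (∑' k, g k) = ∑' n, ∑' k, f k * g (n - k) := by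
  let e : G × G ≃ G × G :=
    ⟨fun p => (p.2, p.1 - p.2), fun p => (p.1 + p.2, p.1), fun p => by simp, fun p => by simp⟩
  rw [tsum_mul_tsum_of_summable_norm hf hg, ← e.tsum_eq]
  exact (e.summable_iff.mpr (summable_mul_of_summable_norm hf hg)).tsum_prod

theorem summable_exp_neg_mul_sub_sq {γ : ℝ} (hγ : 0 < γ) (x : ℝ) :
    Summable fun k : ℤ => Real.exp (-γ * (x - k) ^ 2) := by
  have hθ := (summable_jacobiTheta₂_term_iff ((-(γ * x / Real.pi) : ℝ) * I)
    ((γ / Real.pi : ℝ) * I)).2 (by simpa using div_pos hγ Real.pi_pos)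
  refine (hθ.norm.mul_left (Real.exp (-γ * x ^ 2))).congr fun k => ?_
  rw [norm_jacobiTheta₂_term, ← Real.exp_add]
  congr 1
  simp only [mul_I_im, ofReal_re]
  field_simp
  ring

theorem summable_norm_mul_exp_neg_mul_sub_sq {γ M : ℝ} (hγ : 0 < γ) {c : ℤ → ℂ}
    (hc : ∀ k, ‖c k‖ ≤ M) (x : ℝ) :
    Summable fun k : ℤ => ‖c k * (Real.exp (-γ * (x - k) ^ 2) : ℂ)‖ := by
  refine ((summable_exp_neg_mul_sub_sq hγ x).mul_left M).of_nonneg_of_le (fun _ => norm_nonneg _)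
    fun k => ?_
  rw [norm_mul, norm_real, Real.norm_of_nonneg (Real.exp_nonneg _)]
  exact mul_le_mul_of_nonneg_right (hc k) (Real.exp_nonneg _)

theorem exp_neg_mul_sub_sq_mul_exp_neg_mul_sub_sq (γ x a n : ℝ) :
    Real.exp (-γ * (x - a) ^ 2) * Real.exp (-γ * (x - (n - a)) ^ 2) =
      Real.exp (-γ * a ^ 2) * Real.exp (-γ * (n - a) ^ 2) *
        (Real.exp (γ * n ^ 2 / 2) * Real.exp (-2 * γ * (x - n / 2) ^ 2)) := by
  simp only [← Real.exp_add]
  ring_nf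

theorem stmt2 (γ : ℝ) (hγ : 0 < γ) (c : ℤ → ℂ) (M : ℝ) (hc : ∀ k, ‖c k‖ ≤ M)
    (f : ℝ → ℂ)
    (hf : ∀ x : ℝ, f x = ∑' k : ℤ, c k * (Real.exp (-γ * (x - (k : ℝ))^2) : ℂ))
    (r : ℤ → ℂ)
    (hr : ∀ n : ℤ, r n =
      (∑' k : ℤ, c k * (starRingEnd ℂ) (c (n - k)) *
          (Real.exp (-γ * (k : ℝ)^2) : ℂ) * (Real.exp (-γ * ((n : ℝ) - (k : ℝ))^2) : ℂ)) *
        (Real.exp (γ * (n : ℝ)^2 / 2) : ℂ)) :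
    ∀ x : ℝ, (‖f x‖^2 : ℂ) = ∑' n : ℤ, r n * (Real.exp (-2*γ*(x - (n : ℝ)/2)^2) : ℂ) := by
  intro x
  have ha := summable_norm_mul_exp_neg_mul_sub_sq hγ hc x
  have ha' : Summable fun k : ℤ => ‖conj (c k * (Real.exp (-γ * (x - k) ^ 2) : ℂ))‖ := by
    simpa only [RCLike.norm_conj] using ha
  rw [← mul_conj', hf x, conj_tsum, tsum_mul_tsum_eq_tsum_tsum_sub ha ha']
  refine tsum_congr fun n => ?_
  rw [hr n, mul_assoc, ← tsum_mul_right]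
  refine tsum_congr fun k => ?_
  have hexp := congrArg ((↑) : ℝ → ℂ) (exp_neg_mul_sub_sq_mul_exp_neg_mul_sub_sq γ x k n)
  rw [map_mul, conj_ofReal]
  push_cast at hexp ⊢
  linear_combination c k * conj (c (n - k)) * hexp
end

section
/- For every complex number w that is not an integer, lim_{n→∞} ∑_{|k|≤n} 1/(w+k) = π·cot(πw). -/
/-!
Pairing the terms `k` and `-k` turns the symmetric partial sum into `1 / w` plus the partial
sums of `∑ (1 / (w - m) + 1 / (w + m))`, which are the logarithmic derivatives of the partial
products of Euler's product `sin (π w) = π w ∏ (1 - w² / m²)`. These products converge locally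
uniformly off the integers, so their logarithmic derivatives converge to that of `sin (π w)`.
-/

open Finset Filter

theorem Finset.sum_Icc_neg_self_eq_add_sum_range {M : Type*} [AddCommMonoid M] (f : ℤ → M)
    (n : ℕ) :
    ∑ k ∈ Icc (-n : ℤ) n, f k = f 0 + ∑ j ∈ range n, (f (-(j + 1)) + f (j + 1)) := by
  induction n with
  | zero => simp
  | succ n ih =>
    rw [Nat.cast_add, Nat.cast_one, Icc_succ_succ, sum_union (by simp), sum_pair (by lia), ih,
      sum_range_succ, neg_add]
    abel

theorem stmt11 (w : ℂ) (hw : ∀ k : ℤ, w ≠ (k : ℂ)) :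
    Filter.Tendsto (fun n : ℕ => ∑ k ∈ Finset.Icc (-(n : ℤ)) (n : ℤ), 1 / (w + (k : ℂ)))
      Filter.atTop (nhds ((Real.pi : ℂ) * Complex.cot (Real.pi * w))) := by
  have hw_compl : w ∈ Complex.integerComplement := by
    rintro ⟨k, rfl⟩
    exact hw k rfl
  have hsum : ∀ n : ℕ, ∑ k ∈ Icc (-(n : ℤ)) n, 1 / (w + (k : ℂ)) =
      1 / w + ∑ j ∈ range n, cotTerm w j := fun n => by
    simp [sum_Icc_neg_self_eq_add_sum_range, cotTerm, sub_eq_add_neg, add_comm]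
  simp_rw [hsum]
  simpa using (tendsto_logDeriv_euler_cot_sub hw_compl).const_add (1 / w)
end
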